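/- arXiv:0808.0084 — 5 statements merged into one kernel-verified Lean document; each statement's English description precedes it below -/
import Mathlib

section
/- Suppose ν_1² ≥ 1/2 in the eigenexpansion √π_{-z} = Σ_j ν_j v_j with eigenphases 0 < θ_1 ≤ ... ≤ θ_{n-1} ≤ π/2. Then for every ε < 1/2, HT(P,z) ≤ 4·HT_ε(P,z), where HT(P,z) = Σ_j ν_j²/(1-cos θ_j) and HT_ε(P,z) = min{y : Pr[H_z > y] ≤ ε} for the random variable H_z taking value 1/θ_j² with probability ν_j². -/
/-!
By `1 - cos θ ≥ θ² / 4`, every term of `HT` is at most `4 ν_j² / θ_min²`, so `HT ≤ 4 / θ_min²`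
because `Σ ν_j² ≤ 1`. On the other hand, a threshold `y < 1 / θ_min²` leaves the atom of mass
`ν_min² ≥ 1/2 > ε` in the tail `{H > y}`, so every admissible `y` is at least `1 / θ_min²`.
-/

open Finset

namespace Real

/-- Half-angle formula combined with `sin u ≥ u - u³/6`. -/
theorem sq_div_four_le_one_sub_cos {x : ℝ} (hx : |x| ≤ 2) : x ^ 2 / 4 ≤ 1 - cos x := by
  rw [← cos_abs, ← sq_abs]
  set t := |x|
  have ht0 : 0 ≤ t := abs_nonneg x
  have hcos : 1 - cos t = 2 * sin (t / 2) ^ 2 := by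
    rw [sin_sq_eq_half_sub, mul_div_cancel₀ t two_ne_zero]; ring
  have hsin : t / 2 * (5 / 6) ≤ sin (t / 2) := by
    refine le_trans ?_ (sin_ge_sub_cube (by positivity))
    nlinarith [mul_nonneg ht0 (mul_nonneg ht0 (sub_nonneg.2 hx))]
  rw [hcos]
  nlinarith [pow_le_pow_left₀ (by positivity) hsin 2]

end Real

section UpperQuantile

variable {ι : Type*} [Fintype ι]

/-- `HT_ε` of the paper, for the random variable taking the value `f j` with probability `w j`. -/
noncomputable def upperQuantile (w f : ι → ℝ) (ε : ℝ) : ℝ :=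
  sInf {y : ℝ | ∑ j ∈ univ.filter (fun j => y < f j), w j ≤ ε}

theorem upperQuantile_set_nonempty (w f : ι → ℝ) {ε : ℝ} (hε : 0 ≤ ε) :
    {y : ℝ | ∑ j ∈ univ.filter (fun j => y < f j), w j ≤ ε}.Nonempty := by
  obtain ⟨M, hM⟩ := (Set.finite_range f).bddAbove
  refine ⟨M, ?_⟩
  have hempty : univ.filter (fun j => M < f j) = ∅ :=
    filter_eq_empty_iff.2 fun j _ => not_lt.2 (hM ⟨j, rfl⟩)
  simpa [hempty] using hε

theorem le_of_tail_mass_le {w f : ι → ℝ} (hw : ∀ j, 0 ≤ w j) {ε y : ℝ} {j₀ : ι}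
    (hj₀ : ε < w j₀) (hy : ∑ j ∈ univ.filter (fun j => y < f j), w j ≤ ε) : f j₀ ≤ y := by
  by_contra! hlt
  have hmem : j₀ ∈ univ.filter (fun j => y < f j) := by simpa using hlt
  linarith [single_le_sum (fun j _ => hw j) hmem]

theorem le_upperQuantile {w f : ι → ℝ} (hw : ∀ j, 0 ≤ w j) {ε : ℝ} (hε : 0 ≤ ε) {j₀ : ι}
    (hj₀ : ε < w j₀) : f j₀ ≤ upperQuantile w f ε :=
  le_csInf (upperQuantile_set_nonempty w f hε) fun _ hy => le_of_tail_mass_le hw hj₀ hy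

end UpperQuantile

/-- If `ν₁² ≥ 1/2` for the smallest eigenphase, then for every `ε < 1/2`,
`HT(P,z) ≤ 4 · HT_ε(P,z)`. -/
theorem stmt_5 {J : ℕ} (θ ν : Fin J → ℝ)
    (hθpos : ∀ j, 0 < θ j) (hθle : ∀ j, θ j ≤ Real.pi / 2)
    (hν : ∑ j, ν j ^ 2 ≤ 1)
    (j₀ : Fin J) (hj₀min : ∀ j, θ j₀ ≤ θ j) (hν1 : 1 / 2 ≤ ν j₀ ^ 2)
    (ε : ℝ) (hε0 : 0 < ε) (hε1 : ε < 1 / 2) :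
    ∑ j, ν j ^ 2 / (1 - Real.cos (θ j)) ≤
      4 * sInf {y : ℝ | ∑ j ∈ Finset.univ.filter (fun j => y < 1 / θ j ^ 2), ν j ^ 2 ≤ ε} := by
  have hθ₀ : 0 < θ j₀ := hθpos j₀
  have hquantile : 1 / θ j₀ ^ 2 ≤ upperQuantile (fun j => ν j ^ 2) (fun j => 1 / θ j ^ 2) ε :=
    le_upperQuantile (f := fun j => 1 / θ j ^ 2) (fun j => sq_nonneg (ν j)) hε0.le
      (hε1.trans_le hν1)
  have hterm : ∀ j, ν j ^ 2 / (1 - Real.cos (θ j)) ≤ 4 / θ j₀ ^ 2 * ν j ^ 2 := fun j => by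
    have hθ₀j : θ j₀ ^ 2 / 4 ≤ θ j ^ 2 / 4 := by gcongr; exact hj₀min j
    have hcos : θ j ^ 2 / 4 ≤ 1 - Real.cos (θ j) := Real.sq_div_four_le_one_sub_cos <| by
      rw [abs_of_pos (hθpos j)]; linarith [hθle j, Real.pi_le_four]
    calc ν j ^ 2 / (1 - Real.cos (θ j)) ≤ ν j ^ 2 / (θ j₀ ^ 2 / 4) :=
          div_le_div_of_nonneg_left (sq_nonneg _) (by positivity) (hθ₀j.trans hcos)
      _ = 4 / θ j₀ ^ 2 * ν j ^ 2 := by field_simp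
  calc ∑ j, ν j ^ 2 / (1 - Real.cos (θ j)) ≤ 4 / θ j₀ ^ 2 * ∑ j, ν j ^ 2 := by
        rw [mul_sum]; exact sum_le_sum fun j _ => hterm j
    _ ≤ 4 / θ j₀ ^ 2 := mul_le_of_le_one_right (by positivity) hν
    _ = 4 * (1 / θ j₀ ^ 2) := by ring
    _ ≤ _ := mul_le_mul_of_nonneg_left hquantile (by norm_num)
end

section
/- Let P be an ergodic reversible Markov chain whose k-step non-hitting probability is s_k = Σ_j ν_j² (cos θ_j)^k, and let h_ε(P,z) be the least k with s_k ≤ ε, and HT_ε(P,z) = min{y : Σ_{j : 1/θ_j² > y} ν_j² ≤ ε}. Then h_ε(P,z) ≤ (4 ln(2/ε)) · HT_{ε/2}(P,z). -/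
/-! Write `H = HT_{ε/2}` and `L = log (2/ε)`. The infimum defining `H` is attained, so the
eigenphases with `1/θ_j² > H` carry total weight at most `ε/2`. The others satisfy `θ_j² ≥ 1/H`,
and `cos θ ≤ exp (-θ²/2)` makes `cos θ_j ^ k ≤ ε/2` as soon as `k ≥ 2 H L`. Hence `s_k ≤ ε` for
`k = ⌈2 H L⌉₊`, and `k ≤ 4 H L` because `H ≥ 4/π²` and `L ≥ log 2` force `2 H L ≥ 1/2`. -/

open Real Finset

/-- `cos θ = 1 - 2 sin² (θ/2)` and `sin t ≥ t - t³/6` give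
`cos θ ≤ (1 - (θ/2)²)² ≤ exp (-(θ/2)²)²`. -/
lemma Real.cos_le_exp_neg_sq_div_two {θ : ℝ} (hθ : |θ| ≤ π / 2) :
    cos θ ≤ exp (-(θ ^ 2 / 2)) := by
  rw [← cos_abs, ← sq_abs]
  set t := |θ| / 2 with ht
  have ht0 : 0 ≤ t := by positivity
  have ht1 : t ≤ 1 := by linarith [pi_le_four]
  have hsin : t - t ^ 3 / 6 ≤ sin t := sin_ge_sub_cube ht0
  have hsin_sq : t ^ 2 - t ^ 4 / 2 ≤ sin t ^ 2 := by
    have hpos : 0 ≤ t - t ^ 3 / 6 := by nlinarith [pow_le_one₀ ht0 ht1 (n := 2)]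
    calc t ^ 2 - t ^ 4 / 2 ≤ (t - t ^ 3 / 6) ^ 2 := by nlinarith [pow_nonneg ht0 6]
      _ ≤ sin t ^ 2 := pow_le_pow_left₀ hpos hsin 2
  have hcos : cos |θ| = 1 - 2 * sin t ^ 2 := by
    rw [show |θ| = 2 * t by ring, cos_two_mul, cos_sq']
    ring
  calc cos |θ| ≤ (1 - t ^ 2) ^ 2 := by rw [hcos]; nlinarith
    _ ≤ exp (-t ^ 2) ^ 2 := by
        gcongr
        · nlinarith
        · linarith [add_one_le_exp (-t ^ 2)]
    _ = exp (-(|θ| ^ 2 / 2)) := by rw [← exp_nat_mul]; congr 1; rw [ht]; push_cast; ring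

lemma Real.cos_pow_le_of_two_mul_log_le {θ δ : ℝ} {k : ℕ} (hθ : |θ| ≤ π / 2) (hδ : 0 < δ)
    (hk : 2 * log (1 / δ) ≤ k * θ ^ 2) : cos θ ^ k ≤ δ := by
  have hcos : 0 ≤ cos θ := cos_nonneg_of_neg_pi_div_two_le_of_le (abs_le.mp hθ).1 (abs_le.mp hθ).2
  calc cos θ ^ k ≤ exp (-(θ ^ 2 / 2)) ^ k := by gcongr; exact cos_le_exp_neg_sq_div_two hθ
    _ = exp (-(k * θ ^ 2 / 2)) := by rw [← exp_nat_mul]; ring_nf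
    _ ≤ exp (-log (1 / δ)) := by gcongr; linarith
    _ = δ := by rw [exp_neg, exp_log (by positivity), one_div, inv_inv]

lemma Finset.sum_mul_le_add_of_filter {ι : Type*} [Fintype ι] (p : ι → Prop) [DecidablePred p]
    {w x : ι → ℝ} {δ₁ δ₂ : ℝ} (hw : ∀ j, 0 ≤ w j) (hw₁ : ∑ j, w j ≤ 1) (hx : ∀ j, x j ≤ 1)
    (hp : ∑ j ∈ univ.filter p, w j ≤ δ₁) (hδ₂ : 0 ≤ δ₂) (hnp : ∀ j, ¬ p j → x j ≤ δ₂) :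
    ∑ j, w j * x j ≤ δ₁ + δ₂ := by
  rw [← sum_filter_add_sum_filter_not univ p]
  gcongr
  · calc ∑ j ∈ univ.filter p, w j * x j ≤ ∑ j ∈ univ.filter p, w j :=
          sum_le_sum fun j _ => mul_le_of_le_one_right (hw j) (hx j)
      _ ≤ δ₁ := hp
  · calc ∑ j ∈ univ.filter (¬ p ·), w j * x j ≤ ∑ j ∈ univ.filter (¬ p ·), w j * δ₂ :=
          sum_le_sum fun j hj => mul_le_mul_of_nonneg_left (hnp j (mem_filter.mp hj).2) (hw j)
      _ = (∑ j ∈ univ.filter (¬ p ·), w j) * δ₂ := (sum_mul ..).symm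
      _ ≤ 1 * δ₂ := by
          gcongr
          exact (sum_le_sum_of_subset_of_nonneg (filter_subset _ _) fun j _ _ => hw j).trans hw₁
      _ = δ₂ := one_mul δ₂

section TailWeight

variable {ι : Type*} [Fintype ι] {a w : ι → ℝ} {c y : ℝ}

/-- `HT_ε(P,z)` is `sInf {y | tailWeight (fun j => 1 / θ_j ^ 2) (fun j => ν_j ^ 2) y ≤ ε}`. -/
noncomputable def tailWeight (a w : ι → ℝ) (y : ℝ) : ℝ :=
  ∑ j ∈ univ.filter (fun j => y < a j), w j

lemma tailWeight_le_sum (hw : ∀ j, 0 ≤ w j) : tailWeight a w y ≤ ∑ j, w j :=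
  sum_le_sum_of_subset_of_nonneg (filter_subset _ _) fun j _ _ => hw j

lemma tailWeight_of_forall_lt (h : ∀ j, y < a j) : tailWeight a w y = ∑ j, w j := by
  rw [tailWeight, filter_true_of_mem fun j _ => h j]

lemma exists_tailWeight_eq_zero (a w : ι → ℝ) : ∃ y, tailWeight a w y = 0 := by
  obtain ⟨y, hy⟩ := (Set.finite_range a).bddAbove
  refine ⟨y, sum_eq_zero fun j hj => ?_⟩
  exact absurd (hy (Set.mem_range_self j)) (not_le.mpr (mem_filter.mp hj).2)

lemma sInf_tailWeight_le_eq_zero (hw : ∀ j, 0 ≤ w j) (hc : ∑ j, w j ≤ c) :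
    sInf {y | tailWeight a w y ≤ c} = 0 := by
  have huniv : {y | tailWeight a w y ≤ c} = Set.univ :=
    Set.eq_univ_of_forall fun y => (tailWeight_le_sum hw).trans hc
  rw [huniv, Real.sInf_univ]

lemma exists_le_of_tailWeight_le (hc : c < ∑ j, w j) (hy : tailWeight a w y ≤ c) :
    ∃ j, a j ≤ y := by
  by_contra! h
  rw [tailWeight_of_forall_lt h] at hy
  linarith

/-- The infimum is attained because `tailWeight a w` is right-continuous: it is constant on
`[y, min {a j | y < a j})`. -/
lemma tailWeight_sInf_le (hw : ∀ j, 0 ≤ w j) (hc : 0 ≤ c) :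
    tailWeight a w (sInf {y | tailWeight a w y ≤ c}) ≤ c := by
  set H := sInf {y | tailWeight a w y ≤ c}
  rcases (univ.filter fun j => H < a j).eq_empty_or_nonempty with hA | hA
  · rw [tailWeight, hA, sum_empty]; exact hc
  · have hne : {y | tailWeight a w y ≤ c}.Nonempty :=
      let ⟨y, hy⟩ := exists_tailWeight_eq_zero a w; ⟨y, hy.le.trans hc⟩
    have hH : H < (univ.filter fun j => H < a j).inf' hA a :=
      (lt_inf'_iff hA).mpr fun j hj => (mem_filter.mp hj).2
    obtain ⟨y, hy, hyA⟩ := exists_lt_of_csInf_lt hne hH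
    refine le_trans (sum_le_sum_of_subset_of_nonneg (fun j hj => ?_) fun j _ _ => hw j) hy
    exact mem_filter.mpr ⟨mem_univ j, hyA.trans_le (inf'_le _ hj)⟩

end TailWeight

lemma sum_mul_cos_pow_le {ι : Type*} [Fintype ι] {θ w : ι → ℝ} (hθ : ∀ j, |θ j| ≤ π / 2)
    (hθ₀ : ∀ j, θ j ≠ 0) (hw : ∀ j, 0 ≤ w j) (hw₁ : ∑ j, w j ≤ 1) {δ H : ℝ} (hδ : 0 < δ)
    (hδ₁ : δ ≤ 1)
    (hH : tailWeight (fun j => 1 / θ j ^ 2) w H ≤ δ) {k : ℕ} (hk : 2 * H * log (1 / δ) ≤ k) :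
    ∑ j, w j * cos (θ j) ^ k ≤ δ + δ := by
  refine sum_mul_le_add_of_filter _ hw hw₁ (fun j => pow_le_one₀ ?_ (cos_le_one _)) hH hδ.le
    fun j hj => ?_
  · exact cos_nonneg_of_neg_pi_div_two_le_of_le (abs_le.mp (hθ j)).1 (abs_le.mp (hθ j)).2
  · have hθ2 : 0 < θ j ^ 2 := by have := hθ₀ j; positivity
    have hHθ : 1 ≤ H * θ j ^ 2 := (div_le_iff₀ hθ2).mp (not_lt.mp hj)
    have hL : 0 ≤ log (1 / δ) := log_nonneg (one_le_one_div hδ hδ₁)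
    refine cos_pow_le_of_two_mul_log_le (hθ j) hδ ?_
    nlinarith

/-- `h_ε(P,z) ≤ (4 ln(2/ε)) · HT_{ε/2}(P,z)`, where `h_ε` is the least `k`
with non-hitting probability `s_k = Σ ν_j² (cos θ_j)^k ≤ ε`. -/
theorem stmt_6 {J : ℕ} (θ ν : Fin J → ℝ)
    (hθpos : ∀ j, 0 < θ j) (hθle : ∀ j, θ j ≤ Real.pi / 2)
    (hν : ∑ j, ν j ^ 2 ≤ 1)
    (ε : ℝ) (hε0 : 0 < ε) (hε1 : ε < 1) :
    ((sInf {k : ℕ | ∑ j, ν j ^ 2 * Real.cos (θ j) ^ k ≤ ε} : ℕ) : ℝ) ≤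
      (4 * Real.log (2 / ε)) *
        sInf {y : ℝ | ∑ j ∈ Finset.univ.filter (fun j => y < 1 / θ j ^ 2), ν j ^ 2 ≤ ε / 2} := by
  change _ ≤ _ * sInf {y | tailWeight (fun j => 1 / θ j ^ 2) (fun j => ν j ^ 2) y ≤ ε / 2}
  have hw : ∀ j, 0 ≤ ν j ^ 2 := fun j => sq_nonneg _
  rcases le_or_gt (∑ j, ν j ^ 2) (ε / 2) with hsmall | hlarge
  · have hzero : (0 : ℕ) ∈ {k : ℕ | ∑ j, ν j ^ 2 * cos (θ j) ^ k ≤ ε} := by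
      simpa using hsmall.trans (by linarith)
    rw [Nat.sInf_eq_zero.mpr (Or.inl hzero), sInf_tailWeight_le_eq_zero hw hsmall]
    simp
  have hHT := tailWeight_sInf_le (a := fun j => 1 / θ j ^ 2) hw (half_pos hε0).le
  obtain ⟨j, hj⟩ := exists_le_of_tailWeight_le hlarge hHT
  set H := sInf {y | tailWeight (fun j => 1 / θ j ^ 2) (fun j => ν j ^ 2) y ≤ ε / 2}
  set L := log (2 / ε)
  have hθ : ∀ j, |θ j| ≤ π / 2 := fun j => abs_le.mpr ⟨by linarith [hθpos j, pi_pos], hθle j⟩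
  have hk : ⌈2 * H * L⌉₊ ∈ {k : ℕ | ∑ j, ν j ^ 2 * cos (θ j) ^ k ≤ ε} := by
    have := sum_mul_cos_pow_le hθ (fun j => (hθpos j).ne') hw hν (half_pos hε0) (by linarith) hHT
      (k := ⌈2 * H * L⌉₊) (by rw [one_div_div]; exact Nat.le_ceil _)
    simpa using this
  have hH : 2 / 5 ≤ H := by
    have hθj : 1 / (π / 2) ^ 2 ≤ 1 / θ j ^ 2 :=
      one_div_le_one_div_of_le (pow_pos (hθpos j) 2) (pow_le_pow_left₀ (hθpos j).le (hθle j) 2)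
    have hπ : 2 / 5 ≤ 1 / (π / 2) ^ 2 := by
      rw [le_div_iff₀ (by positivity)]; nlinarith [pi_lt_d2, pi_pos]
    linarith
  have hL : 5 / 8 ≤ L := by
    have : log 2 ≤ L := log_le_log two_pos (by rw [le_div_iff₀ hε0]; linarith)
    linarith [log_two_gt_d9]
  calc ((sInf {k : ℕ | ∑ j, ν j ^ 2 * cos (θ j) ^ k ≤ ε} : ℕ) : ℝ) ≤ ⌈2 * H * L⌉₊ :=
        Nat.cast_le.mpr (Nat.sInf_le hk)
    _ ≤ 2 * (2 * H * L) := Nat.ceil_le_two_mul (by nlinarith)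
    _ = 4 * L * H := by ring
end

section
/- Let U₂ be a real unitary matrix with a unique 1-eigenvector |φ₀⟩, let |μ⟩ be a real unit vector, and set U = U₂(I - 2|μ⟩⟨μ|). If ⟨φ₀|μ⟩ = 0 then U|φ₀⟩ = |φ₀⟩; if ⟨φ₀|μ⟩ ≠ 0 then U has no eigenvalue equal to 1. -/
/-!
Write `U = U₂ R` with `R v = v - 2 ⟨μ, v⟩ μ`. Since `U₂` is orthogonal and fixes `φ₀`, so does `U₂ᵀ`,
hence `⟨φ₀, U₂ w⟩ = ⟨φ₀, w⟩` for all `w`. If `U v = v`, pairing with `φ₀` gives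
`⟨φ₀, v⟩ = ⟨φ₀, v⟩ - 2 ⟨μ, v⟩ ⟨φ₀, μ⟩`, so `⟨μ, v⟩ = 0` when `⟨φ₀, μ⟩ ≠ 0`. Then `R v = v`, so `v` is a
fixed vector of `U₂`, i.e. `v = k φ₀`, and `0 = ⟨μ, v⟩ = k ⟨μ, φ₀⟩` forces `v = 0`.
-/

open Matrix

section

variable {ι K : Type*} [Fintype ι] [DecidableEq ι]

theorem one_sub_two_smul_vecMulVec_mulVec [CommRing K] (μ v : ι → K) :
    (1 - (2 : K) • vecMulVec μ μ) *ᵥ v = v - (2 * (μ ⬝ᵥ v)) • μ := by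
  rw [sub_mulVec, one_mulVec, smul_mulVec, vecMulVec_mulVec, op_smul_eq_smul, smul_smul]

theorem vecMul_eq_self_of_transpose_mul_self_eq_one [CommSemiring K] {A : Matrix ι ι K}
    (hA : Aᵀ * A = 1) {x : ι → K} (hx : A *ᵥ x = x) : x ᵥ* A = x := by
  rw [← mulVec_transpose]
  conv_rhs => rw [← one_mulVec x, ← hA, ← mulVec_mulVec, hx]

theorem dotProduct_eq_zero_of_mulVec_reflection_eq_self [Field K] [NeZero (2 : K)]
    {A : Matrix ι ι K} {x μ v : ι → K} (hx : x ᵥ* A = x) (hxμ : x ⬝ᵥ μ ≠ 0)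
    (hv : (A * (1 - (2 : K) • vecMulVec μ μ)) *ᵥ v = v) : μ ⬝ᵥ v = 0 := by
  have hpair : x ⬝ᵥ v = x ⬝ᵥ v - 2 * (μ ⬝ᵥ v) * (x ⬝ᵥ μ) := by
    conv_lhs => rw [← hv, ← mulVec_mulVec, dotProduct_mulVec, hx,
      one_sub_two_smul_vecMulVec_mulVec, dotProduct_sub, dotProduct_smul, smul_eq_mul]
  have : 2 * (μ ⬝ᵥ v) * (x ⬝ᵥ μ) = 0 := by linear_combination hpair
  simpa [hxμ, two_ne_zero] using this

end

theorem stmt_8_general {n : ℕ} (U2 : Matrix (Fin n) (Fin n) ℝ)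
    (hU2 : U2.transpose * U2 = 1)
    (φ0 : Fin n → ℝ) (hfix : U2.mulVec φ0 = φ0)
    (hunique : ∀ v : Fin n → ℝ, U2.mulVec v = v → ∃ c : ℝ, v = c • φ0)
    (μ : Fin n → ℝ) :
    ((∑ i, φ0 i * μ i) = 0 →
      (U2 * (1 - (2 : ℝ) • Matrix.vecMulVec μ μ)).mulVec φ0 = φ0) ∧
    ((∑ i, φ0 i * μ i) ≠ 0 →
      ¬ ∃ v : Fin n → ℝ, v ≠ 0 ∧
        (U2 * (1 - (2 : ℝ) • Matrix.vecMulVec μ μ)).mulVec v = v) := by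
  change (φ0 ⬝ᵥ μ = 0 → _) ∧ (φ0 ⬝ᵥ μ ≠ 0 → _)
  have hU : ∀ v, (U2 * (1 - (2 : ℝ) • vecMulVec μ μ)) *ᵥ v = U2 *ᵥ (v - (2 * (μ ⬝ᵥ v)) • μ) :=
    fun v => by rw [← mulVec_mulVec, one_sub_two_smul_vecMulVec_mulVec]
  refine ⟨fun hφμ => ?_, fun hφμ ⟨v, hv0, hv⟩ => hv0 ?_⟩
  · rw [hU, dotProduct_comm, hφμ]
    simpa using hfix
  · have hμv := dotProduct_eq_zero_of_mulVec_reflection_eq_self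
      (vecMul_eq_self_of_transpose_mul_self_eq_one hU2 hfix) hφμ hv
    rw [hU, hμv] at hv
    obtain ⟨k, rfl⟩ := hunique v (by simpa using hv)
    rw [dotProduct_smul, smul_eq_mul, dotProduct_comm] at hμv
    rw [(mul_eq_zero.mp hμv).resolve_right hφμ, zero_smul]

/-- For an abstract search operator `U = U₂ (I - 2|μ⟩⟨μ|)` with `U₂` real
orthogonal having unique 1-eigenvector `φ₀`: if `⟨φ₀|μ⟩ = 0` then `U φ₀ = φ₀`;
if `⟨φ₀|μ⟩ ≠ 0` then `U` has no 1-eigenvector. -/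
theorem stmt_8 {n : ℕ} (U2 : Matrix (Fin n) (Fin n) ℝ)
    (hU2 : U2.transpose * U2 = 1)
    (φ0 : Fin n → ℝ) (hφ0 : φ0 ≠ 0) (hfix : U2.mulVec φ0 = φ0)
    (hunique : ∀ v : Fin n → ℝ, U2.mulVec v = v → ∃ c : ℝ, v = c • φ0)
    (μ : Fin n → ℝ) (hμ : ∑ i, μ i ^ 2 = 1) :
    ((∑ i, φ0 i * μ i) = 0 →
      (U2 * (1 - (2 : ℝ) • Matrix.vecMulVec μ μ)).mulVec φ0 = φ0) ∧
    ((∑ i, φ0 i * μ i) ≠ 0 →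
      ¬ ∃ v : Fin n → ℝ, v ≠ 0 ∧
        (U2 * (1 - (2 : ℝ) • Matrix.vecMulVec μ μ)).mulVec v = v) :=
  stmt_8_general U2 hU2 φ0 hfix hunique μ
end

section
/- For a reversible ergodic Markov chain P with all eigenvalues positive, the quantum z-hitting time satisfies QHT(P,z) = Σ_j ν_j²/θ_j = E[√H_z], and hence QHT(P,z) ≤ √(E[H_z]) ≤ √(HT(P,z)/2). -/
/-! The first inequality is Cauchy–Schwarz for the weights `ν_j²` (Jensen for `√` when
`Σ ν_j² = 1`); the second is termwise, from `2 (1 - cos θ) ≤ θ²`. -/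

open Real Finset

theorem sum_sq_div_le_sqrt_sum_sq_div_sq {ι : Type*} (s : Finset ι) (ν θ : ι → ℝ)
    (hν : ∑ j ∈ s, ν j ^ 2 ≤ 1) :
    ∑ j ∈ s, ν j ^ 2 / θ j ≤ √(∑ j ∈ s, ν j ^ 2 / θ j ^ 2) :=
  calc ∑ j ∈ s, ν j ^ 2 / θ j = ∑ j ∈ s, ν j * (ν j / θ j) := by
        refine sum_congr rfl fun j _ ↦ ?_; ring
    _ ≤ √(∑ j ∈ s, ν j ^ 2) * √(∑ j ∈ s, (ν j / θ j) ^ 2) := sum_mul_le_sqrt_mul_sqrt s _ _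
    _ ≤ √(∑ j ∈ s, ν j ^ 2 / θ j ^ 2) := by
        simp_rw [div_pow]
        exact mul_le_of_le_one_left (sqrt_nonneg _) (sqrt_le_one.mpr hν)

theorem two_mul_one_sub_cos_le_sq (x : ℝ) : 2 * (1 - cos x) ≤ x ^ 2 := by
  linarith [one_sub_sq_div_two_le_cos (x := x)]

theorem one_sub_cos_pos {x : ℝ} (hx₀ : 0 < x) (hx : x < 2 * π) : 0 < 1 - cos x := by
  have hne : cos x ≠ 1 := fun h ↦
    hx₀.ne' ((cos_eq_one_iff_of_lt_of_lt (by linarith) hx).mp h)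
  linarith [(cos_le_one x).lt_of_ne hne]

theorem div_sq_le_div_one_sub_cos_div_two {a x : ℝ} (ha : 0 ≤ a) (hx₀ : 0 < x)
    (hx : x < 2 * π) : a / x ^ 2 ≤ a / (1 - cos x) / 2 := by
  rw [div_div, mul_comm]
  exact div_le_div_of_nonneg_left ha (by linarith [one_sub_cos_pos hx₀ hx])
    (two_mul_one_sub_cos_le_sq x)

/-- `QHT(P,z) = Σ ν_j²/θ_j ≤ √(E[H_z]) ≤ √(HT(P,z)/2)`. -/
theorem stmt_10 {J : ℕ} (θ ν : Fin J → ℝ)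
    (hθpos : ∀ j, 0 < θ j) (hθlt : ∀ j, θ j < Real.pi / 2)
    (hν : ∑ j, ν j ^ 2 ≤ 1) :
    (∑ j, ν j ^ 2 / θ j) ≤ Real.sqrt (∑ j, ν j ^ 2 / θ j ^ 2) ∧
      Real.sqrt (∑ j, ν j ^ 2 / θ j ^ 2) ≤
        Real.sqrt ((∑ j, ν j ^ 2 / (1 - Real.cos (θ j))) / 2) := by
  refine ⟨sum_sq_div_le_sqrt_sum_sq_div_sq _ ν θ hν, sqrt_le_sqrt ?_⟩
  rw [sum_div]
  exact sum_le_sum fun j _ ↦ div_sq_le_div_one_sub_cos_div_two (sq_nonneg _) (hθpos j)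
    (by linarith [hθlt j, pi_pos])
end

section
/- Under the hypotheses of the preceding lemma (in particular tan θ = a₀ cot(α₁/2)/10 and cot(α₁^θ/2) ≤ 1.01 cot(α₁/2)), the modified eigenvectors satisfy ‖w_{α₁,θ} − w_{−α₁,θ}‖² ≤ 8 cos²θ · ‖w_{α₁} − w_{−α₁}‖², and hence ‖w_{±α₁,θ}‖ ≤ 3 cos θ · ‖w_{±α₁}‖. -/
/-! Term by term, the bracket defining `‖w_{α₁,θ} − w_{−α₁,θ}‖²` is dominated by the one defining
`‖w_{α₁} − w_{−α₁}‖²`: the `cot²` term grows by at most `1.01²`, the sum decreases because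
`x ↦ sin x / (cos x − cos θ_j)` is increasing on `[0, θ_j)`, and since `tan (α₁^θ/2) ≤ 1` the
extra term is at most `a₀² cot² (α₁/2) / 100`. This leaves a factor `2` to spare in the first
claim; the second is its square root. -/

open Real

lemma sin_div_cos_sub_cos_nonneg {x t : ℝ} (hx : 0 ≤ x) (hxt : x < t) (ht : t ≤ π) :
    0 ≤ sin x / (cos x - cos t) :=
  div_nonneg (sin_nonneg_of_nonneg_of_le_pi hx (by linarith))
    (sub_nonneg.2 (cos_le_cos_of_nonneg_of_le_pi hx ht hxt.le))

lemma cot_nonneg_of_nonneg_of_le_pi_div_two {x : ℝ} (h0 : 0 ≤ x) (h1 : x ≤ π / 2) :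
    0 ≤ cot x := by
  rw [cot_eq_cos_div_sin]
  exact div_nonneg (cos_nonneg_of_mem_Icc ⟨by linarith [pi_pos], h1⟩)
    (sin_nonneg_of_nonneg_of_le_pi h0 (by linarith [pi_pos]))

lemma tan_sq_le_one_of_nonneg_of_le_pi_div_four {x : ℝ} (h0 : 0 ≤ x) (h1 : x ≤ π / 4) :
    tan x ^ 2 ≤ 1 := by
  have hπ := pi_pos
  refine pow_le_one₀ (tan_nonneg_of_nonneg_of_le_pi_div_two h0 (by linarith)) ?_
  exact tan_pi_div_four ▸ strictMonoOn_tan.monotoneOn ⟨by linarith, by linarith⟩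
    ⟨by linarith, by linarith⟩ h1

/-- With `x = v - u` and `y = v + u`, the cross-multiplied difference is
`2 sin u (cos u - cos t cos v)`, and `|cos v| ≤ cos u` because `u ≤ min v (π - v)`. -/
lemma monotoneOn_sin_div_cos_sub_cos {t : ℝ} (ht : t ≤ π) :
    MonotoneOn (fun x => sin x / (cos x - cos t)) (Set.Ico 0 t) := by
  rintro x ⟨hx0, hxt⟩ y ⟨hy0, hyt⟩ hxy
  have hden : ∀ z, 0 ≤ z → z < t → 0 < cos z - cos t := fun z hz0 hzt =>
    sub_pos.2 (cos_lt_cos_of_nonneg_of_le_pi hz0 ht hzt)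
  rw [div_le_div_iff₀ (hden x hx0 hxt) (hden y hy0 hyt)]
  obtain ⟨u, v, rfl, rfl⟩ : ∃ u v, x = v - u ∧ y = v + u :=
    ⟨(y - x) / 2, (y + x) / 2, by ring, by ring⟩
  have hu : 0 ≤ u := by linarith
  have hcos_v : |cos v| ≤ cos u := by
    refine abs_le.2 ⟨?_, cos_le_cos_of_nonneg_of_le_pi hu (by linarith) (by linarith)⟩
    rw [neg_le, ← cos_pi_sub]
    exact cos_le_cos_of_nonneg_of_le_pi hu (by linarith) (by linarith)
  have hcos_t_v : cos t * cos v ≤ |cos v| := by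
    calc cos t * cos v ≤ |cos t| * |cos v| := by rw [← abs_mul]; exact le_abs_self _
      _ ≤ |cos v| := mul_le_of_le_one_left (abs_nonneg _) (abs_cos_le_one t)
  have hsin_u : 0 ≤ sin u := sin_nonneg_of_nonneg_of_le_pi hu (by linarith)
  have hdiff : sin (v + u) * (cos (v - u) - cos t) - sin (v - u) * (cos (v + u) - cos t)
      = 2 * sin u * (cos u - cos t * cos v) := by
    rw [sin_add, sin_sub, cos_add, cos_sub]
    linear_combination (2 * sin u * cos u) * sin_sq_add_cos_sq v
  linarith [mul_nonneg hsin_u (by linarith : 0 ≤ cos u - cos t * cos v)]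

lemma sum_mul_sq_sin_div_cos_sub_cos_le {ι : Type*} [Fintype ι] (w θ : ι → ℝ) {x y : ℝ}
    (hx : 0 ≤ x) (hxy : x ≤ y) (hyθ : ∀ i, y < θ i) (hθπ : ∀ i, θ i ≤ π) :
    ∑ i, w i ^ 2 * (sin x / (cos x - cos (θ i))) ^ 2
      ≤ ∑ i, w i ^ 2 * (sin y / (cos y - cos (θ i))) ^ 2 := by
  gcongr ∑ i, _ * ?_ ^ 2 with i
  · exact sin_div_cos_sub_cos_nonneg hx (hxy.trans_lt (hyθ i)) (hθπ i)
  · exact monotoneOn_sin_div_cos_sub_cos (hθπ i) ⟨hx, hxy.trans_lt (hyθ i)⟩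
      ⟨hx.trans hxy, hyθ i⟩ hxy

theorem stmt_18_general {J : ℕ} (θ : Fin J → ℝ) (a0 : ℝ) (a : Fin J → ℝ)
    (α1 αθ θmin θv : ℝ)
    (hθmin : ∀ j, θmin ≤ θ j) (hθπ : ∀ j, θ j < Real.pi)
    (hαθ0 : 0 < αθ) (hαθα1 : αθ ≤ α1) (hα1lt : α1 < θmin) (hα1 : α1 ≤ Real.pi / 4)
    (hθv : 0 ≤ θv ∧ θv < Real.pi / 2)
    (htan : Real.tan θv = a0 * Real.cot (α1 / 2) / 10)
    (hcot : Real.cot (αθ / 2) ≤ 1.01 * Real.cot (α1 / 2))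
    (N Nθ : ℝ) (hN : 0 ≤ N)
    (hNsq : 2 * N ^ 2 = 4 * (a0 ^ 2 * Real.cot (α1 / 2) ^ 2 +
      2 * ∑ j, a j ^ 2 * (Real.sin α1 / (Real.cos α1 - Real.cos (θ j))) ^ 2))
    (hNθsq : 2 * Nθ ^ 2 = 4 * Real.cos θv ^ 2 *
      (a0 ^ 2 * Real.cot (αθ / 2) ^ 2 +
        2 * (∑ j, a j ^ 2 * (Real.sin αθ / (Real.cos αθ - Real.cos (θ j))) ^ 2) +
        Real.tan θv ^ 2 * Real.tan (αθ / 2) ^ 2)) :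
    2 * Nθ ^ 2 ≤ 8 * Real.cos θv ^ 2 * (2 * N ^ 2) ∧
      Nθ ≤ 3 * Real.cos θv * N := by
  have hπ := pi_pos
  have hsum := sum_mul_sq_sin_div_cos_sub_cos_le a θ hαθ0.le hαθα1
    (fun j => hα1lt.trans_le (hθmin j)) (fun j => (hθπ j).le)
  have hsum_nonneg : 0 ≤ ∑ j, a j ^ 2 * (sin α1 / (cos α1 - cos (θ j))) ^ 2 := by positivity
  have hcθ := cot_nonneg_of_nonneg_of_le_pi_div_two (x := αθ / 2) (by linarith) (by linarith)
  have htθ := tan_sq_le_one_of_nonneg_of_le_pi_div_four (x := αθ / 2) (by linarith) (by linarith)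
  set c1 := cot (α1 / 2)
  set cθ := cot (αθ / 2)
  have hcot_sq : a0 ^ 2 * cθ ^ 2 ≤ 1.0201 * (a0 ^ 2 * c1 ^ 2) :=
    calc a0 ^ 2 * cθ ^ 2 ≤ a0 ^ 2 * (1.01 * c1) ^ 2 := by gcongr
      _ = 1.0201 * (a0 ^ 2 * c1 ^ 2) := by ring
  have htan_sq : tan θv ^ 2 * tan (αθ / 2) ^ 2 ≤ a0 ^ 2 * c1 ^ 2 / 100 :=
    calc tan θv ^ 2 * tan (αθ / 2) ^ 2 = a0 ^ 2 * c1 ^ 2 / 100 * tan (αθ / 2) ^ 2 := by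
          rw [htan]; ring
      _ ≤ a0 ^ 2 * c1 ^ 2 / 100 := mul_le_of_le_one_right (by positivity) htθ
  have hbracket : a0 ^ 2 * cθ ^ 2 + 2 * (∑ j, a j ^ 2 * (sin αθ / (cos αθ - cos (θ j))) ^ 2) +
      tan θv ^ 2 * tan (αθ / 2) ^ 2 ≤ N ^ 2 := by
    linarith [sq_nonneg (a0 * c1)]
  have hmain : 2 * Nθ ^ 2 ≤ 8 * cos θv ^ 2 * (2 * N ^ 2) := by
    rw [hNθsq]
    linarith [mul_le_mul_of_nonneg_left hbracket (sq_nonneg (cos θv)), sq_nonneg (cos θv * N)]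
  refine ⟨hmain, le_of_sq_le_sq ?_ ?_⟩
  · linarith [sq_nonneg (cos θv * N)]
  · have := cos_nonneg_of_mem_Icc ⟨by linarith, hθv.2.le⟩
    positivity

/-- `‖w_{α₁,θ} - w_{-α₁,θ}‖² ≤ 8 cos²θ ‖w_{α₁} - w_{-α₁}‖²` and hence
`‖w_{±α₁,θ}‖ ≤ 3 cosθ ‖w_{±α₁}‖`, where `‖w_{α₁} - w_{-α₁}‖² = 2‖w_{±α₁}‖²`
by orthogonality and equality of norms. -/
theorem stmt_18 {J : ℕ} (θ : Fin J → ℝ) (a0 : ℝ) (a : Fin J → ℝ)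
    (α1 αθ θmin θv : ℝ)
    (hθmin : ∀ j, θmin ≤ θ j) (hθπ : ∀ j, θ j < Real.pi)
    (hαθ0 : 0 < αθ) (hαθα1 : αθ ≤ α1) (hα1lt : α1 < θmin) (hα1 : α1 ≤ Real.pi / 4)
    (ha0 : a0 ≠ 0)
    (hθv : 0 ≤ θv ∧ θv < Real.pi / 2)
    (htan : Real.tan θv = a0 * Real.cot (α1 / 2) / 10)
    (hcot : Real.cot (αθ / 2) ≤ 1.01 * Real.cot (α1 / 2))
    (N Nθ : ℝ) (hN : 0 ≤ N) (hNθ : 0 ≤ Nθ)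
    (hNsq : 2 * N ^ 2 = 4 * (a0 ^ 2 * Real.cot (α1 / 2) ^ 2 +
      2 * ∑ j, a j ^ 2 * (Real.sin α1 / (Real.cos α1 - Real.cos (θ j))) ^ 2))
    (hNθsq : 2 * Nθ ^ 2 = 4 * Real.cos θv ^ 2 *
      (a0 ^ 2 * Real.cot (αθ / 2) ^ 2 +
        2 * (∑ j, a j ^ 2 * (Real.sin αθ / (Real.cos αθ - Real.cos (θ j))) ^ 2) +
        Real.tan θv ^ 2 * Real.tan (αθ / 2) ^ 2)) :
    2 * Nθ ^ 2 ≤ 8 * Real.cos θv ^ 2 * (2 * N ^ 2) ∧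
      Nθ ≤ 3 * Real.cos θv * N :=
  stmt_18_general θ a0 a α1 αθ θmin θv hθmin hθπ hαθ0 hαθα1 hα1lt hα1 hθv htan hcot N Nθ hN hNsq
    hNθsq
end
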